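/- arXiv:0808.2877 — 3 statements merged into one kernel-verified Lean document; each statement's English description precedes it below -/
import Mathlib

section
/- Let μ be a discrete Gibbs measure μ(k) = (1/Z) e^{V(k)} ω^k / k! on {0,...,N}, f : {0,...,N} → ℝ bounded, and define g(0) = 0 and g(j+1) = (j!/ω^{j+1}) e^{-V(j+1)} Σ_{k=0}^{j} e^{V(k)} (ω^k/k!)(f(k) - μ(f)) for 0 ≤ j ≤ N-1. Then g solves the Stein equation g(k+1) ω e^{V(k+1)-V(k)} - k g(k) = f(k) - μ(f) for all k ≤ N (with the convention g(N+1) = 0 when N is finite). -/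
/-!
With the unnormalised weights `w k = e^{V k} ω^k / k!`, the Stein operator rewrites as
`g (k+1) ω e^{V(k+1) - V k} - k g k = (h (k+1) - h k) / w k` where `h k = k w(k) g(k)`.
The recursion for `g` says exactly that `h` is the partial sum `∑_{i<k} w i (f i - μ f)`;
this also holds at `k = N + 1`, where `g (N+1) = 0`, because the full sum vanishes, `μ f`
being the `w`-weighted mean of `f`. The Stein equation is then the difference of two
consecutive partial sums.
-/

open Finset Nat Real

theorem sum_mul_sub_weightedMean_eq_zero {ι : Type*} (s : Finset ι) (w f : ι → ℝ)
    (hZ : ∑ i ∈ s, w i ≠ 0) :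
    ∑ i ∈ s, w i * (f i - ∑ j ∈ s, f j * (w j / ∑ l ∈ s, w l)) = 0 := by
  simp only [mul_sub, sum_sub_distrib, ← sum_mul, ← mul_div_assoc, ← sum_div]
  rw [mul_div_cancel_left₀ _ hZ]
  exact sub_eq_zero.mpr (sum_congr rfl fun i _ => mul_comm _ _)

noncomputable def gibbsWeight (V : ℕ → ℝ) (ω : ℝ) (k : ℕ) : ℝ :=
  exp (V k) * ω ^ k / k !

section gibbsWeight

variable {V : ℕ → ℝ} {ω : ℝ}

theorem gibbsWeight_pos (hω : 0 < ω) (k : ℕ) : 0 < gibbsWeight V ω k := by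
  unfold gibbsWeight; positivity

theorem succ_mul_gibbsWeight_succ (k : ℕ) :
    (k + 1) * gibbsWeight V ω (k + 1) = gibbsWeight V ω k * ω * exp (V (k + 1) - V k) := by
  unfold gibbsWeight
  rw [exp_sub, factorial_succ]
  push_cast
  field_simp
  ring

theorem factorial_div_pow_mul_exp_neg (hω : 0 < ω) (k : ℕ) :
    (k ! : ℝ) / ω ^ (k + 1) * exp (-V (k + 1)) =
      (((k + 1 : ℕ) : ℝ) * gibbsWeight V ω (k + 1))⁻¹ := by
  unfold gibbsWeight
  rw [exp_neg, factorial_succ]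
  have hω0 := hω.ne'
  push_cast
  field_simp

theorem stein_operator_eq (hω : 0 < ω) (g : ℕ → ℝ) (k : ℕ) :
    g (k + 1) * ω * exp (V (k + 1) - V k) - k * g k =
      ((k + 1 : ℕ) * gibbsWeight V ω (k + 1) * g (k + 1) - k * gibbsWeight V ω k * g k) /
        gibbsWeight V ω k := by
  have hw := (gibbsWeight_pos (V := V) hω k).ne'
  push_cast
  rw [succ_mul_gibbsWeight_succ]
  field_simp

end gibbsWeight

theorem mul_gibbsWeight_mul_eq_sum {N : ℕ} {V : ℕ → ℝ} {ω : ℝ} (hω : 0 < ω) {f g : ℕ → ℝ}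
    {m : ℝ} (hcentred : ∑ i ∈ range (N + 1), gibbsWeight V ω i * (f i - m) = 0)
    (hg0 : g 0 = 0) (hgN : g (N + 1) = 0)
    (hg : ∀ j : ℕ, j < N → g (j + 1) =
      (j ! : ℝ) / ω ^ (j + 1) * exp (-(V (j + 1))) *
        ∑ i ∈ range (j + 1), gibbsWeight V ω i * (f i - m)) :
    ∀ k ≤ N + 1, k * gibbsWeight V ω k * g k = ∑ i ∈ range k, gibbsWeight V ω i * (f i - m)
  | 0, _ => by simp [hg0]
  | j + 1, hj => by
    rcases (Nat.le_of_succ_le_succ hj).lt_or_eq with hjN | rfl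
    · have hw : ((j + 1 : ℕ) : ℝ) * gibbsWeight V ω (j + 1) ≠ 0 :=
        mul_ne_zero (by positivity) (gibbsWeight_pos hω (j + 1)).ne'
      rw [hg j hjN, factorial_div_pow_mul_exp_neg hω, ← mul_assoc,
        mul_inv_cancel₀ hw, one_mul]
    · rw [hgN, mul_zero, hcentred]

/-- The forward-recursion formula (2.5) solves the Stein equation (2.4) for a
discrete Gibbs measure μ(k) = e^{V(k)} ω^k / (k! Z) on {0,…,N}, with the convention
g(N+1) = 0. -/
theorem stein_equation_solution (N : ℕ) (V : ℕ → ℝ) (ω Z : ℝ) (hω : 0 < ω)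
    (hZ : Z = ∑ k ∈ Finset.range (N + 1), Real.exp (V k) * ω ^ k / (Nat.factorial k))
    (f : ℕ → ℝ) (μf : ℝ)
    (hμf : μf = ∑ k ∈ Finset.range (N + 1),
      f k * (Real.exp (V k) * ω ^ k / (Nat.factorial k) / Z))
    (g : ℕ → ℝ) (hg0 : g 0 = 0) (hgN : g (N + 1) = 0)
    (hg : ∀ j : ℕ, j < N → g (j + 1) =
      (Nat.factorial j : ℝ) / ω ^ (j + 1) * Real.exp (-(V (j + 1))) *
        ∑ k ∈ Finset.range (j + 1),
          Real.exp (V k) * ω ^ k / (Nat.factorial k) * (f k - μf)) :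
    ∀ k : ℕ, k ≤ N →
      g (k + 1) * ω * Real.exp (V (k + 1) - V k) - k * g k = f k - μf := by
  intro k hk
  have hcentred : ∑ i ∈ range (N + 1), gibbsWeight V ω i * (f i - μf) = 0 := by
    subst hZ hμf
    exact sum_mul_sub_weightedMean_eq_zero _ _ _
      (sum_pos (fun i _ => gibbsWeight_pos hω i) nonempty_range_add_one).ne'
  have hprimitive := mul_gibbsWeight_mul_eq_sum hω hcentred hg0 hgN hg
  rw [stein_operator_eq hω, hprimitive (k + 1) (by omega), hprimitive k (by omega),
    sum_range_succ_sub_sum, mul_div_cancel_left₀ _ (gibbsWeight_pos hω k).ne']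
end

section
/- Let g be the solution of the Stein equation for the geometric distribution μ(k) = p(1-p)^k on ℕ₀ (with birth rates b_k = (1-p)(k+1) and unit per capita death rates), for a test function f : ℕ₀ → [0,1]. Then |g(j+1)| ≤ 1/(p(j+1)) for all j ≥ 0, and hence sup_j |g(j)| ≤ 1/p. -/
/-!
Since `f` and its mean `μ(f)` both lie in `[0, 1]`, every summand `f k - μ(f)` of the tail defining
`g (j + 1)` has absolute value at most `1`. The tail is therefore dominated by the geometric tail
`∑_{k > j} (1 - p)^k = (1 - p)^(j + 1) / p`, whose leading power cancels the prefactor of `g (j + 1)`.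
-/

open Set

lemma tsum_mul_mem_Icc_of_hasSum_one {ι : Type*} {w f : ι → ℝ} (hw : ∀ i, 0 ≤ w i)
    (hw1 : HasSum w 1) (hf : ∀ i, f i ∈ Icc (0 : ℝ) 1) : ∑' i, f i * w i ∈ Icc (0 : ℝ) 1 := by
  have hle : ∀ i, f i * w i ≤ w i := fun i => mul_le_of_le_one_left (hw i) (hf i).2
  have hnonneg : ∀ i, 0 ≤ f i * w i := fun i => mul_nonneg (hf i).1 (hw i)
  have hsum : Summable fun i => f i * w i := hw1.summable.of_nonneg_of_le hnonneg hle
  exact ⟨tsum_nonneg hnonneg, hw1.tsum_eq ▸ hsum.tsum_le_tsum hle hw1.summable⟩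

lemma hasSum_geometric_pmf {p : ℝ} (hp : 0 < p) (hp1 : p < 1) :
    HasSum (fun k : ℕ => p * (1 - p) ^ k) 1 := by
  have h := (hasSum_geometric_of_lt_one (by linarith) (by linarith : 1 - p < 1)).mul_left p
  rwa [sub_sub_cancel, mul_inv_cancel₀ hp.ne'] at h

section GeometricTail

variable {r : ℝ}

lemma hasSum_geometric_tail (hr0 : 0 ≤ r) (hr1 : r < 1) (n : ℕ) :
    HasSum (fun k : ℕ => if n ≤ k then r ^ k else 0) (r ^ n / (1 - r)) := by
  rw [← hasSum_nat_add_iff' n]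
  have hhead : ∑ i ∈ Finset.range n, (if n ≤ i then r ^ i else 0) = 0 :=
    Finset.sum_eq_zero fun i hi => if_neg (by simpa using hi)
  simp only [le_add_iff_nonneg_left, zero_le, if_true, pow_add, hhead, sub_zero]
  simpa [div_eq_mul_inv, mul_comm] using (hasSum_geometric_of_lt_one hr0 hr1).mul_left (r ^ n)

lemma abs_tsum_geometric_tail_le (hr0 : 0 ≤ r) (hr1 : r < 1) {c : ℕ → ℝ} (hc : ∀ k, |c k| ≤ 1)
    (n : ℕ) :
    |∑' k : ℕ, if n ≤ k then r ^ k * c k else 0| ≤ r ^ n / (1 - r) := by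
  rw [← Real.norm_eq_abs]
  refine tsum_of_norm_bounded (hasSum_geometric_tail hr0 hr1 n) fun k => ?_
  split_ifs
  · rw [norm_mul, norm_pow, Real.norm_of_nonneg hr0]
    exact mul_le_of_le_one_right (pow_nonneg hr0 k) (hc k)
  · simp

end GeometricTail

/-- Bound on the solution of the Stein equation for the geometric distribution
μ(k) = p(1-p)^k: |g(j+1)| ≤ 1/(p(j+1)) for all j ≥ 0, hence ‖g‖ ≤ 1/p. -/
theorem geometric_stein_solution_bound (p : ℝ) (hp : 0 < p) (hp1 : p < 1)
    (f : ℕ → ℝ) (hf : ∀ k, 0 ≤ f k ∧ f k ≤ 1)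
    (μf : ℝ) (hμf : μf = ∑' k : ℕ, f k * (p * (1 - p) ^ k))
    (g : ℕ → ℝ) (hg0 : g 0 = 0)
    (hg : ∀ j : ℕ, g (j + 1) =
      -(1 / ((1 - p) ^ (j + 1) * ((j : ℝ) + 1))) *
        ∑' k : ℕ, (if j + 1 ≤ k then (1 - p) ^ k * (f k - μf) else 0)) :
    (∀ j : ℕ, |g (j + 1)| ≤ 1 / (p * ((j : ℝ) + 1))) ∧ ∀ j : ℕ, |g j| ≤ 1 / p := by
  have hr0 : 0 < 1 - p := by linarith
  have hr1 : 1 - p < 1 := by linarith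
  have hμ : μf ∈ Icc (0 : ℝ) 1 := hμf ▸
    tsum_mul_mem_Icc_of_hasSum_one (fun k => by positivity) (hasSum_geometric_pmf hp hp1) hf
  have hc : ∀ k, |f k - μf| ≤ 1 := fun k =>
    abs_sub_le_of_nonneg_of_le (hf k).1 (hf k).2 hμ.1 hμ.2
  have hstep : ∀ j : ℕ, |g (j + 1)| ≤ 1 / (p * ((j : ℝ) + 1)) := by
    intro j
    have htail := abs_tsum_geometric_tail_le hr0.le hr1 hc (j + 1)
    rw [sub_sub_cancel] at htail
    have hpow : 0 < (1 - p) ^ (j + 1) := pow_pos hr0 _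
    rw [hg j, abs_mul, abs_neg, abs_of_pos (by positivity)]
    calc _ ≤ 1 / ((1 - p) ^ (j + 1) * ((j : ℝ) + 1)) * ((1 - p) ^ (j + 1) / p) := by gcongr
      _ = 1 / (p * ((j : ℝ) + 1)) := by field_simp
  refine ⟨hstep, fun j => ?_⟩
  cases j with
  | zero => simpa [hg0] using hp.le
  | succ j =>
    exact (hstep j).trans (one_div_le_one_div_of_le hp (le_mul_of_one_le_right hp.le (by simp)))
end

section
/- For the Poisson distribution Po(λ) and any k ≥ 1, (1/k) Σ_{l=0}^{k-1} e^{-λ} λ^l/l! + (1/λ) Σ_{l=k+1}^{∞} e^{-λ} λ^l/l! ≤ (1/λ)(1 - e^{-λ}). -/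
/-!
Write `p l = e^{-λ} λ^l / l!`. The ratio `p (l + 1) = λ / (l + 1) * p l` gives, for `l < k`,
`p l / k ≤ p l / (l + 1) = p (l + 1) / λ`, so the first sum is at most `(p 1 + ⋯ + p k) / λ`.
Adding the tail `(p (k + 1) + ⋯) / λ` leaves `(1 - p 0) / λ = (1 - e^{-λ}) / λ`.
-/

open Finset Real
open scoped Nat

theorem tsum_ite_le_eq_sub {G : Type*} [AddCommGroup G] [TopologicalSpace G]
    [IsTopologicalAddGroup G] [T2Space G] {f : ℕ → G} {a : G} (hf : HasSum f a) (k : ℕ) :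
    ∑' l, (if k ≤ l then f l else 0) = a - ∑ l ∈ range k, f l := by
  have hshift : HasSum (fun n ↦ if k ≤ n + k then f (n + k) else 0) (a - ∑ l ∈ range k, f l) := by
    simpa using (hasSum_nat_add_iff' k).mpr hf
  have hhead : ∑ l ∈ range k, (if k ≤ l then f l else 0) = 0 :=
    sum_eq_zero fun l hl ↦ if_neg (by simpa using hl)
  refine ((hasSum_nat_add_iff' k).mp ?_).tsum_eq
  simpa [hhead] using hshift

noncomputable def poissonWeight (lam : ℝ) (l : ℕ) : ℝ :=
  exp (-lam) * lam ^ l / l !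

namespace poissonWeight

theorem hasSum (lam : ℝ) : HasSum (poissonWeight lam) 1 := by
  have h := (NormedSpace.expSeries_div_hasSum_exp lam).mul_left (exp (-lam))
  rw [← exp_eq_exp_ℝ, ← exp_add, neg_add_cancel, exp_zero] at h
  simp only [← mul_div_assoc] at h
  exact h

theorem nonneg {lam : ℝ} (hlam : 0 ≤ lam) (l : ℕ) : 0 ≤ poissonWeight lam l := by
  unfold poissonWeight
  positivity

theorem zero (lam : ℝ) : poissonWeight lam 0 = exp (-lam) := by
  simp [poissonWeight]

theorem succ (lam : ℝ) (l : ℕ) :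
    poissonWeight lam (l + 1) = lam / (l + 1) * poissonWeight lam l := by
  simp only [poissonWeight, Nat.factorial_succ, Nat.cast_mul, Nat.cast_succ, pow_succ]
  field_simp

theorem div_le_succ_div {lam : ℝ} (hlam : 0 < lam) {k l : ℕ} (hl : l < k) :
    poissonWeight lam l / k ≤ poissonWeight lam (l + 1) / lam := by
  have hlk : (l : ℝ) + 1 ≤ k := by exact_mod_cast hl
  calc poissonWeight lam l / k ≤ poissonWeight lam l / (l + 1) :=
        div_le_div_of_nonneg_left (nonneg hlam.le l) (by positivity) hlk
    _ = poissonWeight lam (l + 1) / lam := by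
        rw [succ]
        field_simp

theorem sum_range_div_le {lam : ℝ} (hlam : 0 < lam) (k : ℕ) :
    1 / (k : ℝ) * ∑ l ∈ range k, poissonWeight lam l
      ≤ 1 / lam * ∑ l ∈ range k, poissonWeight lam (l + 1) := by
  simp only [mul_sum, one_div_mul_eq_div]
  exact sum_le_sum fun l hl ↦ div_le_succ_div hlam (mem_range.mp hl)

end poissonWeight

theorem poisson_increment_bound_general (lam : ℝ) (hlam : 0 < lam) (k : ℕ) :
    1 / (k : ℝ) * ∑ l ∈ Finset.range k, Real.exp (-lam) * lam ^ l / (Nat.factorial l)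
      + 1 / lam *
        ∑' l : ℕ, (if k + 1 ≤ l then Real.exp (-lam) * lam ^ l / (Nat.factorial l) else 0)
      ≤ 1 / lam * (1 - Real.exp (-lam)) := by
  simp only [← poissonWeight.eq_1]
  rw [tsum_ite_le_eq_sub (poissonWeight.hasSum lam), sum_range_succ', poissonWeight.zero]
  linear_combination poissonWeight.sum_range_div_le hlam k

/-- Poisson nonuniform increment bound: for k ≥ 1,
(1/k) Σ_{l<k} e^{-λ} λ^l/l! + (1/λ) Σ_{l≥k+1} e^{-λ} λ^l/l! ≤ (1/λ)(1-e^{-λ}). -/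
theorem poisson_increment_bound (lam : ℝ) (hlam : 0 < lam) (k : ℕ) (hk : 1 ≤ k) :
    1 / (k : ℝ) * ∑ l ∈ Finset.range k, Real.exp (-lam) * lam ^ l / (Nat.factorial l)
      + 1 / lam *
        ∑' l : ℕ, (if k + 1 ≤ l then Real.exp (-lam) * lam ^ l / (Nat.factorial l) else 0)
      ≤ 1 / lam * (1 - Real.exp (-lam)) :=
  poisson_increment_bound_general lam hlam k
end
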